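/- arXiv:2304.04562 — 2 statements merged into one kernel-verified Lean document; each statement's English description precedes it below -/
import Mathlib

section
/- Let $k$ be a field, let $d \geq 1$, and let $\varphi$ be a homogeneous polynomial of degree $d$ in $N+1$ variables over $k$ that is diagonal-full (for each $i \in \{0,\dots,N\}$, the coefficient of the monomial $x_i^d$ in $\varphi$ is nonzero) and anisotropic over $k$. Let $s = (s_0, \dots, s_N) \in k[t]^{N+1}$ be a nonzero vector of polynomials. Then $\deg(\varphi(s_0,\dots,s_N)) = d \cdot \max_{i=0,\dots,N} \deg(s_i)$; in particular $\varphi(s_0,\dots,s_N) \neq 0$. -/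
/-! If every `sᵢ` has degree at most `e`, then `φ(s)` has degree at most `d e`, and its
coefficient of `t^(d e)` is `φ` evaluated at the vector of `t^e`-coefficients of the `sᵢ`.
Taking `e` to be the maximal degree, that vector of leading terms is nonzero, so anisotropy
makes the coefficient nonzero and the degree exactly `d e`. -/

open Polynomial Finset

namespace Polynomial

variable {R : Type*} [CommSemiring R]

theorem coeff_prod_sum_of_natDegree_le {ι : Type*} (t : Finset ι) (f : ι → R[X])
    (n : ι → ℕ) (h : ∀ i ∈ t, (f i).natDegree ≤ n i) :
    (∏ i ∈ t, f i).coeff (∑ i ∈ t, n i) = ∏ i ∈ t, (f i).coeff (n i) := by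
  classical
  induction t using Finset.cons_induction with
  | empty => simp
  | cons a t ha ih =>
    have hrest : ∀ i ∈ t, (f i).natDegree ≤ n i := fun i hi => h i (mem_cons_of_mem hi)
    rw [prod_cons, sum_cons, prod_cons,
      coeff_mul_add_eq_of_natDegree_le (h a (mem_cons_self a t))
        ((natDegree_prod_le t f).trans (sum_le_sum hrest)), ih hrest]

variable {σ : Type*} [Fintype σ] {s : σ → R[X]} {e : ℕ}

theorem natDegree_prod_pow_le (hs : ∀ i, (s i).natDegree ≤ e) (m : σ → ℕ) :
    (∏ i, s i ^ m i).natDegree ≤ (∑ i, m i) * e := by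
  rw [sum_mul]
  exact (natDegree_prod_le _ _).trans
    (sum_le_sum fun i _ => natDegree_pow_le.trans (Nat.mul_le_mul_left (m i) (hs i)))

theorem coeff_prod_pow_of_natDegree_le (hs : ∀ i, (s i).natDegree ≤ e) (m : σ → ℕ) :
    (∏ i, s i ^ m i).coeff ((∑ i, m i) * e) = ∏ i, (s i).coeff e ^ m i := by
  rw [sum_mul, coeff_prod_sum_of_natDegree_le _ _ _
    fun i _ => natDegree_pow_le.trans (Nat.mul_le_mul_left (m i) (hs i))]
  exact prod_congr rfl fun i _ => coeff_pow_of_natDegree_le (hs i)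

end Polynomial

namespace MvPolynomial.IsHomogeneous

variable {R σ : Type*} [CommSemiring R] [Fintype σ] {φ : MvPolynomial σ R} {d : ℕ}
  {s : σ → R[X]} {e : ℕ}

theorem sum_eq_of_mem_support (hφ : φ.IsHomogeneous d) {m : σ →₀ ℕ}
    (hm : m ∈ φ.support) : ∑ i, m i = d := by
  rw [← Finsupp.degree_eq_sum, Finsupp.degree_apply, ← hφ.degree_eq_sum_deg_support hm]

theorem natDegree_eval_map_C_le (hφ : φ.IsHomogeneous d)
    (hs : ∀ i, (s i).natDegree ≤ e) :
    (eval s (map Polynomial.C φ)).natDegree ≤ d * e := by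
  rw [eval_map, eval₂_eq']
  refine natDegree_sum_le_of_forall_le _ _ fun m hm => ?_
  refine natDegree_C_mul_le _ _ |>.trans ?_
  rw [← hφ.sum_eq_of_mem_support hm]
  exact natDegree_prod_pow_le hs m

theorem coeff_eval_map_C (hφ : φ.IsHomogeneous d) (hs : ∀ i, (s i).natDegree ≤ e) :
    (eval s (map Polynomial.C φ)).coeff (d * e) = eval (fun i => (s i).coeff e) φ := by
  rw [eval_map, eval₂_eq', finsetSum_coeff, eval_eq']
  refine sum_congr rfl fun m hm => ?_
  rw [Polynomial.coeff_C_mul, ← hφ.sum_eq_of_mem_support hm, coeff_prod_pow_of_natDegree_le hs]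

end MvPolynomial.IsHomogeneous

theorem Polynomial.exists_ne_zero_natDegree_eq_sup {R ι : Type*} [Semiring R] [Fintype ι]
    {s : ι → R[X]} (hs : s ≠ 0) :
    ∃ i, s i ≠ 0 ∧ (s i).natDegree = univ.sup fun i => (s i).natDegree := by
  obtain ⟨i, hi⟩ := Function.ne_iff.mp hs
  obtain ⟨j, -, hj⟩ := exists_mem_eq_sup univ ⟨i, mem_univ i⟩ fun i => (s i).natDegree
  by_cases hj0 : s j = 0
  · refine ⟨i, hi, le_antisymm (le_sup (f := fun i => (s i).natDegree) (mem_univ i)) ?_⟩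
    simp [hj, hj0]
  · exact ⟨j, hj0, hj.symm⟩

theorem degree_eval_poly_vector_general (k : Type) [Field k] (d N : ℕ)
    (φ : MvPolynomial (Fin (N + 1)) k) (hφ : φ.IsHomogeneous d)
    (haniso : ¬ ∃ v : Fin (N + 1) → k, v ≠ 0 ∧ MvPolynomial.eval v φ = 0)
    (s : Fin (N + 1) → Polynomial k) (hs : s ≠ 0) :
    MvPolynomial.eval s (MvPolynomial.map Polynomial.C φ) ≠ 0 ∧
    (MvPolynomial.eval s (MvPolynomial.map Polynomial.C φ)).natDegree =
      d * Finset.univ.sup (fun i => (s i).natDegree) := by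
  set e := univ.sup fun i => (s i).natDegree
  have hle : ∀ i, (s i).natDegree ≤ e := fun i =>
    le_sup (f := fun i => (s i).natDegree) (mem_univ i)
  obtain ⟨j, hj0, hje⟩ := exists_ne_zero_natDegree_eq_sup hs
  have hlead : (fun i => (s i).coeff e) ≠ 0 := fun h =>
    hj0 (leadingCoeff_eq_zero.mp (by rw [leadingCoeff, hje]; exact congrFun h j))
  have hcoeff : (MvPolynomial.eval s (MvPolynomial.map C φ)).coeff (d * e) ≠ 0 := by
    rw [hφ.coeff_eval_map_C hle]
    exact fun h => haniso ⟨_, hlead, h⟩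
  exact ⟨fun h => hcoeff (by rw [h, coeff_zero]),
    (hφ.natDegree_eval_map_C_le hle).antisymm (le_natDegree_of_ne_zero hcoeff)⟩

/-- **Lemma (degree of values on polynomial vectors).** Let `φ` be a diagonal-full,
anisotropic degree-`d ≥ 1` form in `N+1` variables over a field `k`, and let
`s ∈ k[t]^{N+1}` be a nonzero vector of polynomials. Then
`deg(φ(s)) = d · max_i deg(s_i)`; in particular `φ(s) ≠ 0`. -/
theorem degree_eval_poly_vector (k : Type) [Field k] (d N : ℕ) (hd : 1 ≤ d)
    (φ : MvPolynomial (Fin (N + 1)) k) (hφ : φ.IsHomogeneous d)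
    (hdiag : ∀ i : Fin (N + 1), MvPolynomial.coeff (Finsupp.single i d) φ ≠ 0)
    (haniso : ¬ ∃ v : Fin (N + 1) → k, v ≠ 0 ∧ MvPolynomial.eval v φ = 0)
    (s : Fin (N + 1) → Polynomial k) (hs : s ≠ 0) :
    MvPolynomial.eval s (MvPolynomial.map Polynomial.C φ) ≠ 0 ∧
    (MvPolynomial.eval s (MvPolynomial.map Polynomial.C φ)).natDegree =
      d * Finset.univ.sup (fun i => (s i).natDegree) :=
  degree_eval_poly_vector_general k d N φ hφ haniso s hs
end

section
/- Let $k$ be a field and let $\varphi$ be a homogeneous polynomial of degree $3$ in $N+1$ variables over $k$. If $\varphi$ is isotropic over some field extension $K/k$ with $[K:k]=2$, then $\varphi$ is already isotropic over $k$. -/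
/-!
Write a `K`-isotropic vector as `w = a + θ b` with `a, b` over `k`, where `θ` generates `K/k`.
The polynomial `f(X) = φ(a + X b)` over `k` has degree at most `3` and vanishes at `θ`, so the
quadratic minimal polynomial of `θ` divides it. The cofactor is either linear, giving a root
`t ∈ k` and the zero `a + t b` of `φ`, or constant, in which case the `X³`-coefficient `φ(b)`
of `f` vanishes. If the zero found this way is the zero vector, then `w` is a `K`-multiple of a
vector over `k`, and by homogeneity that vector is isotropic.
-/

open Polynomial

theorem Polynomial.coeff_prod_sum_of_natDegree_le_s10 {R ι : Type*} [CommSemiring R]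
    (s : Finset ι) (p : ι → R[X]) (d : ι → ℕ) (h : ∀ i ∈ s, (p i).natDegree ≤ d i) :
    (∏ i ∈ s, p i).coeff (∑ i ∈ s, d i) = ∏ i ∈ s, (p i).coeff (d i) := by
  classical
  induction s using Finset.induction_on with
  | empty => simp
  | insert a s ha ih =>
    simp only [Finset.forall_mem_insert] at h
    rw [Finset.prod_insert ha, Finset.prod_insert ha, Finset.sum_insert ha,
      coeff_mul_add_eq_of_natDegree_le h.1
        ((natDegree_prod_le _ _).trans (Finset.sum_le_sum h.2)), ih h.2]

namespace MvPolynomial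

variable {σ R : Type*} [CommSemiring R] {φ : MvPolynomial σ R} {n : ℕ}

def IsIsotropic (φ : MvPolynomial σ R) : Prop := ∃ v : σ → R, v ≠ 0 ∧ eval v φ = 0

namespace IsHomogeneous

theorem eval_smul (hφ : φ.IsHomogeneous n) (c : R) (x : σ → R) :
    eval (c • x) φ = c ^ n * eval x φ := by
  simp only [eval_eq, Finset.mul_sum, Pi.smul_apply, smul_eq_mul, mul_pow,
    Finset.prod_mul_distrib]
  refine Finset.sum_congr rfl fun d hd => ?_
  rw [Finset.prod_pow_eq_pow_sum, ← hφ.degree_eq_sum_deg_support hd]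
  ring

variable {g : σ → R[X]} {m : ℕ}

theorem natDegree_aeval_le (hφ : φ.IsHomogeneous n) (hg : ∀ i, (g i).natDegree ≤ m) :
    (MvPolynomial.aeval g φ).natDegree ≤ n * m := by
  rw [aeval_def, eval₂_eq]
  refine natDegree_sum_le_of_forall_le _ _ fun d hd => ?_
  refine (natDegree_C_mul_le _ _).trans <| (natDegree_prod_le _ _).trans ?_
  rw [hφ.degree_eq_sum_deg_support hd, Finset.sum_mul]
  exact Finset.sum_le_sum fun i _ => natDegree_pow_le_of_le _ (hg i)

theorem coeff_aeval (hφ : φ.IsHomogeneous n) (hg : ∀ i, (g i).natDegree ≤ m) :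
    (MvPolynomial.aeval g φ).coeff (n * m) = eval (fun i => (g i).coeff m) φ := by
  rw [aeval_def, eval₂_eq, finsetSum_coeff, eval_eq]
  refine Finset.sum_congr rfl fun d hd => ?_
  rw [Polynomial.algebraMap_eq, Polynomial.coeff_C_mul, hφ.degree_eq_sum_deg_support hd,
    Finset.sum_mul,
    coeff_prod_sum_of_natDegree_le_s10 _ _ _ fun i _ => natDegree_pow_le_of_le _ (hg i)]
  simp only [coeff_pow_of_natDegree_le (hg _)]

end IsHomogeneous

end MvPolynomial

section QuadraticExtension

variable {k K : Type*} [Field k]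

theorem exists_isRoot_or_coeff_eq_zero_of_aeval_eq_zero [Ring K] [Algebra k K] {θ : K}
    {f : k[X]} (hf : f.natDegree ≤ (minpoly k θ).natDegree + 1) (hfθ : aeval θ f = 0) :
    (∃ t, f.IsRoot t) ∨ f.coeff ((minpoly k θ).natDegree + 1) = 0 := by
  obtain ⟨q, rfl⟩ := minpoly.dvd k θ hfθ
  by_cases hf0 : minpoly k θ * q = 0
  · exact .inl ⟨0, by simp [hf0]⟩
  obtain ⟨hμ, hq⟩ := mul_ne_zero_iff.mp hf0
  rw [natDegree_mul hμ hq] at hf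
  by_cases hq1 : q.natDegree = 1
  · obtain ⟨t, ht⟩ := exists_root_of_degree_eq_one ((degree_eq_iff_natDegree_eq hq).mpr hq1)
    exact .inl ⟨t, ht.dvd (dvd_mul_left q _)⟩
  · exact .inr (coeff_eq_zero_of_natDegree_lt ((natDegree_mul hμ hq).trans_lt (by omega)))

theorem exists_forall_eq_algebraMap_add_algebraMap_mul [Ring K] [Algebra k K]
    (hK : Module.finrank k K = 2) :
    ∃ θ : K, (minpoly k θ).natDegree = 2 ∧
      ∀ y : K, ∃ a b : k, algebraMap k K a + algebraMap k K b * θ = y := by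
  have : Module.Finite k K := Module.finite_of_finrank_eq_succ hK
  have : Nontrivial K := Module.nontrivial_of_finrank_eq_succ hK
  obtain ⟨θ, hθ⟩ : ∃ θ : K, θ ∉ (⊥ : Subalgebra k K) := by
    by_contra! h
    exact absurd (Subalgebra.bot_eq_top_iff_finrank_eq_one.mp (eq_top_iff.mpr fun y _ => h y))
      (by omega)
  have hdeg : (minpoly k θ).natDegree = 2 :=
    le_antisymm (hK ▸ minpoly.natDegree_le θ)
      ((minpoly.two_le_natDegree_iff (.of_finite k θ)).mpr hθ)
  have hadjoin : Algebra.adjoin k {θ} = ⊤ :=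
    ((Subalgebra.isSimpleOrder_of_finrank hK).eq_bot_or_eq_top _).resolve_left fun h =>
      hθ (h ▸ Algebra.self_mem_adjoin_singleton k θ)
  refine ⟨θ, hdeg, fun y => ?_⟩
  have hy : y ∈ Algebra.adjoin k {θ} := hadjoin ▸ Algebra.mem_top
  rw [Algebra.adjoin_singleton_eq_range_aeval] at hy
  obtain ⟨p, rfl⟩ := (AlgHom.mem_range _).mp hy
  have hr : (p %ₘ minpoly k θ).natDegree ≤ 1 := by
    have := natDegree_modByMonic_lt p (minpoly.monic (.of_finite k θ)) (minpoly.ne_one k θ)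
    omega
  refine ⟨(p %ₘ minpoly k θ).coeff 0, (p %ₘ minpoly k θ).coeff 1, ?_⟩
  rw [← aeval_modByMonic_eq_self_of_root (minpoly.aeval k θ)]
  conv_rhs => rw [eq_X_add_C_of_natDegree_le_one hr]
  simp only [map_add, map_mul, aeval_C, aeval_X]
  exact add_comm _ _

variable [CommRing K] [IsDomain K] [Algebra k K] {σ : Type*} {φ : MvPolynomial σ k} {n : ℕ}
  {w : σ → K}

theorem MvPolynomial.IsHomogeneous.isIsotropic_of_eq_smul (hφ : φ.IsHomogeneous n)
    (hw0 : w ≠ 0) (hw : MvPolynomial.eval w (MvPolynomial.map (algebraMap k K) φ) = 0)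
    {c : K} {x : σ → k} (hwx : w = c • (algebraMap k K ∘ x)) : φ.IsIsotropic := by
  subst hwx
  have hc : c ≠ 0 := by rintro rfl; simp at hw0
  refine ⟨x, by rintro rfl; simp at hw0, ?_⟩
  rw [(hφ.map _).eval_smul, eval_map, ← eval₂_comp] at hw
  exact (FaithfulSMul.algebraMap_injective k K).eq_iff.mp <|
    ((mul_eq_zero.mp hw).resolve_left (pow_ne_zero _ hc)).trans (map_zero _).symm

variable {θ : K} {a b : σ → k}

theorem MvPolynomial.IsHomogeneous.isIsotropic_of_eval_add_mul_eq_zero (hφ : φ.IsHomogeneous n)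
    (hw0 : w ≠ 0) (hw : MvPolynomial.eval w (MvPolynomial.map (algebraMap k K) φ) = 0)
    (hab : ∀ i, algebraMap k K (a i) + algebraMap k K (b i) * θ = w i) {t : k}
    (ht : MvPolynomial.eval (fun i => a i + b i * t) φ = 0) : φ.IsIsotropic := by
  by_cases h0 : (fun i => a i + b i * t) = 0
  · refine hφ.isIsotropic_of_eq_smul hw0 hw (c := θ - algebraMap k K t) (x := b) ?_
    ext i
    have hai : a i = -(b i * t) := eq_neg_of_add_eq_zero_left (congrFun h0 i)
    simp only [← hab i, hai, Pi.smul_apply, Function.comp_apply, smul_eq_mul, map_neg, map_mul]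
    ring
  · exact ⟨_, h0, ht⟩

theorem MvPolynomial.IsHomogeneous.isIsotropic_of_eval_direction_eq_zero
    (hφ : φ.IsHomogeneous n)
    (hw0 : w ≠ 0) (hw : MvPolynomial.eval w (MvPolynomial.map (algebraMap k K) φ) = 0)
    (hab : ∀ i, algebraMap k K (a i) + algebraMap k K (b i) * θ = w i)
    (hb : MvPolynomial.eval b φ = 0) : φ.IsIsotropic := by
  by_cases hb0 : b = 0
  · refine hφ.isIsotropic_of_eq_smul hw0 hw (c := 1) (x := a) ?_
    ext i
    simp [← hab i, hb0]
  · exact ⟨b, hb0, hb⟩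

end QuadraticExtension

/-- **Corollary (cubic forms and quadratic extensions).** Let `k` be a field and `φ` a
cubic form in `N+1` variables over `k`. If `φ` is isotropic over some quadratic extension
`K/k`, then `φ` is already isotropic over `k`. -/
theorem cubic_quadratic_descent (k : Type) [Field k] (N : ℕ)
    (φ : MvPolynomial (Fin (N + 1)) k) (hφ : φ.IsHomogeneous 3)
    (K : Type) [Field K] [Algebra k K] (hK : Module.finrank k K = 2)
    (hiso : ∃ w : Fin (N + 1) → K, w ≠ 0 ∧
      MvPolynomial.eval w (MvPolynomial.map (algebraMap k K) φ) = 0) :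
    ∃ v : Fin (N + 1) → k, v ≠ 0 ∧ MvPolynomial.eval v φ = 0 := by
  obtain ⟨w, hw0, hw⟩ := hiso
  obtain ⟨θ, hθ, hspan⟩ := exists_forall_eq_algebraMap_add_algebraMap_mul hK
  choose a b hab using fun i => hspan (w i)
  set ℓ : Fin (N + 1) → k[X] := fun i => C (a i) + C (b i) * X
  have hℓ : ∀ i, (ℓ i).natDegree ≤ 1 := fun i => by simp only [ℓ]; compute_degree
  have hfθ : aeval θ (MvPolynomial.aeval ℓ φ) = 0 := by
    rw [MvPolynomial.comp_aeval_apply, ← hw, MvPolynomial.eval_map, MvPolynomial.aeval_def]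
    congr 1
    funext i
    simp [ℓ, ← hab]
  rcases exists_isRoot_or_coeff_eq_zero_of_aeval_eq_zero
    (by simpa [hθ] using hφ.natDegree_aeval_le hℓ) hfθ with ⟨t, ht⟩ | h3
  · rw [IsRoot.def, ← coe_aeval_eq_eval, MvPolynomial.comp_aeval_apply] at ht
    exact hφ.isIsotropic_of_eval_add_mul_eq_zero hw0 hw hab (by simpa [ℓ] using ht)
  · rw [hθ] at h3
    exact hφ.isIsotropic_of_eval_direction_eq_zero hw0 hw hab
      (by simpa [ℓ] using (hφ.coeff_aeval hℓ).symm.trans h3)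
end
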